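/- For every r ∈ ℝ[n] there exists a differential operator B̄ in the associative algebra generated by D₁ = z∂_z and D₂ = z∂_z² + (β+1)∂_z such that for all n ≥ -1, Σ_{s=0}^{n} [r(s) p_s^{α,β}(z) - r(-s-α-β) p_{s-1}^{α,β}(z)] = B̄ p_n^{α,β}(z), with the convention p_{-1} = 0. -/

import Mathlib

open Finset Polynomial

/-- Shifted factorial (Pochhammer symbol) `(a)_m = a(a+1)⋯(a+m-1)`. -/
noncomputable def poch (a : ℝ) (m : ℕ) : ℝ := ∏ i ∈ Finset.range m, (a + i)

/-- The Jacobi polynomial `p_n^{α,β}` as an element of `ℝ[X]`. -/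
noncomputable def jacobiPoly (α β : ℝ) (n : ℕ) : Polynomial ℝ :=
  Polynomial.C ((-1 : ℝ) ^ n * poch (α + β + 1) n / (Nat.factorial n)) *
    ∑ m ∈ Finset.range (n + 1),
      Polynomial.C (poch (-(n : ℝ)) m * poch ((n : ℝ) + α + β + 1) m /
        (poch (β + 1) m * Nat.factorial m)) * Polynomial.X ^ m

/-- Jacobi polynomials indexed by an integer, with the convention `p_n = 0` for `n < 0`. -/
noncomputable def jacobiPolyZ (α β : ℝ) (n : ℤ) : Polynomial ℝ :=
  if n < 0 then 0 else jacobiPoly α β n.toNat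

/-- The operator `D₁ = z ∂_z` as an endomorphism of `ℝ[X]`. -/
noncomputable def D1op : Module.End ℝ (Polynomial ℝ) :=
  (LinearMap.mulLeft ℝ (Polynomial.X : Polynomial ℝ)).comp Polynomial.derivative

/-- The operator `D₂ = z ∂_z² + (β+1) ∂_z` as an endomorphism of `ℝ[X]`. -/
noncomputable def D2op (β : ℝ) : Module.End ℝ (Polynomial ℝ) :=
  (LinearMap.mulLeft ℝ (Polynomial.X : Polynomial ℝ)).comp
      (Polynomial.derivative.comp Polynomial.derivative)
    + (β + 1) • (Polynomial.derivative : Polynomial ℝ →ₗ[ℝ] Polynomial ℝ)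

lemma poch_succ (a : ℝ) (m : ℕ) : poch a (m+1) = poch a m * (a + m) := by
  simp [poch, Finset.prod_range_succ]

lemma poch_shift (a : ℝ) (m : ℕ) : poch a m * (a + m) = a * poch (a+1) m := by
  rw [← poch_succ]
  unfold poch
  rw [Finset.prod_range_succ']
  simp only [Nat.cast_zero, add_zero]
  rw [mul_comm]
  congr 1
  apply Finset.prod_congr rfl
  intro i _
  push_cast
  ring

lemma poch_ne_zero {β : ℝ} (hβ : ∀ j : ℕ, β + 1 + (j : ℝ) ≠ 0) (m : ℕ) :
    poch (β+1) m ≠ 0 := by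
  unfold poch
  rw [Finset.prod_ne_zero_iff]
  intro i _
  exact hβ i

lemma D1_CX (a : ℝ) (m : ℕ) : D1op (C a * X^m) = C ((m:ℝ) * a) * X^m := by
  simp only [D1op, LinearMap.comp_apply, LinearMap.mulLeft_apply, derivative_C_mul,
    derivative_X_pow]
  cases m with
  | zero => simp
  | succ k =>
    simp only [Nat.add_sub_cancel]
    push_cast
    simp only [C_mul, C_add, C_1, C_0, map_ofNat]
    ring

lemma D2_CX (β a : ℝ) (m : ℕ) :
    D2op β (C a * X^m) = C ((m:ℝ) * ((m:ℝ) + β) * a) * X^(m-1) := by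
  simp only [D2op, LinearMap.add_apply, LinearMap.comp_apply, LinearMap.mulLeft_apply,
    LinearMap.smul_apply, derivative_C_mul, derivative_X_pow]
  match m with
  | 0 => simp
  | 1 =>
    simp only [pow_one, Nat.sub_self, pow_zero, derivative_X, mul_one, derivative_one,
      mul_zero, Nat.cast_one, derivative_C_mul, zero_add]
    rw [Polynomial.smul_eq_C_mul]
    push_cast
    simp only [C_mul, C_add, C_1, C_0, map_ofNat]
    ring
  | (k+2) =>
    simp only [Nat.succ_sub_one]
    rw [Polynomial.smul_eq_C_mul]
    push_cast
    simp only [C_mul, C_add, C_1, C_0, map_ofNat]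
    ring

noncomputable def jc (α β : ℝ) (n : ℕ) : ℝ := (-1:ℝ)^n * poch (α+β+1) n / (Nat.factorial n)
noncomputable def ja (α β : ℝ) (n m : ℕ) : ℝ :=
  poch (-(n:ℝ)) m * poch ((n:ℝ)+α+β+1) m / (poch (β+1) m * Nat.factorial m)

lemma coeff_rec (α β : ℝ) (hβ : ∀ j : ℕ, β + 1 + (j : ℝ) ≠ 0) (n m : ℕ) :
    ((m:ℝ)+1) * (((m:ℝ)+1)+β) * ja α β n (m+1)
      = ((m:ℝ)*((m:ℝ)+α+β+1) - (n:ℝ)*((n:ℝ)+α+β+1)) * ja α β n m := by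
  unfold ja
  rw [poch_succ, poch_succ, poch_succ (β+1)]
  rw [Nat.factorial_succ]
  push_cast
  have h1 := poch_ne_zero hβ m
  have h2 := hβ m
  have h3 : ((Nat.factorial m : ℝ)) ≠ 0 := Nat.cast_ne_zero.mpr (Nat.factorial_ne_zero m)
  have h4 : ((m:ℝ)+1) ≠ 0 := by positivity
  field_simp
  ring

lemma lower_core (α β : ℝ) (n m : ℕ) :
    (-1:ℝ)^(n+1) * (poch (α+β+1) n * (α+β+1+(n:ℝ)))
        * (((m:ℝ)-((n:ℝ)+1)) * poch (-((n:ℝ)+1)) m * poch ((n:ℝ)+1+α+β+1) m)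
      = (-1:ℝ)^n * poch (α+β+1) n
        * (((m:ℝ)+(n:ℝ)+α+β+1) * poch (-(n:ℝ)) m * poch ((n:ℝ)+α+β+1) m) * ((n:ℝ)+1) := by
  have e1 : poch (-((n:ℝ)+1)) m * ((-((n:ℝ)+1)) + m) = (-((n:ℝ)+1)) * poch (-(n:ℝ)) m := by
    have h := poch_shift (-((n:ℝ)+1)) m
    rw [show -((n:ℝ)+1) + 1 = -(n:ℝ) by ring] at h
    exact h
  have e2 : poch ((n:ℝ)+α+β+1) m * ((n:ℝ)+α+β+1 + m) = ((n:ℝ)+α+β+1) * poch ((n:ℝ)+1+α+β+1) m := by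
    have h := poch_shift ((n:ℝ)+α+β+1) m
    rw [show (n:ℝ)+α+β+1+1 = (n:ℝ)+1+α+β+1 by ring] at h
    exact h
  linear_combination ((-1:ℝ)^(n+1) * poch (α+β+1) n * (α+β+1+(n:ℝ)) * poch ((n:ℝ)+1+α+β+1) m) * e1
    - ((-1:ℝ)^n * poch (α+β+1) n * ((n:ℝ)+1) * poch (-(n:ℝ)) m) * e2

lemma lower_rec (α β : ℝ) (hβ : ∀ j : ℕ, β + 1 + (j : ℝ) ≠ 0) (n m : ℕ) :
    jc α β (n+1) * ((m:ℝ) - ((n:ℝ)+1)) * ja α β (n+1) m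
      = jc α β n * ((m:ℝ) + (n:ℝ)+α+β+1) * ja α β n m := by
  have core := lower_core α β n m
  unfold jc ja
  rw [poch_succ (α+β+1) n, Nat.factorial_succ]
  simp only [Nat.cast_add, Nat.cast_mul, Nat.cast_one]
  set A := poch (-((n:ℝ)+1)) m with hA
  set B := poch ((n:ℝ)+1+α+β+1) m with hB
  set Pn := poch (α+β+1) n with hPn
  set A0 := poch (-(n:ℝ)) m with hA0
  set B0 := poch ((n:ℝ)+α+β+1) m with hB0
  set Dm := poch (β+1) m with hDm
  have h1 := poch_ne_zero hβ m
  rw [← hDm] at h1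
  have h3 : ((Nat.factorial m : ℝ)) ≠ 0 := Nat.cast_ne_zero.mpr (Nat.factorial_ne_zero m)
  have h5 : ((Nat.factorial n : ℝ)) ≠ 0 := Nat.cast_ne_zero.mpr (Nat.factorial_ne_zero n)
  have h4 : ((n:ℝ)+1) ≠ 0 := by positivity
  field_simp
  linear_combination core

lemma jacobi_sum (α β : ℝ) (n : ℕ) :
    jacobiPoly α β n = ∑ m ∈ Finset.range (n+1), C (jc α β n * ja α β n m) * X^m := by
  rw [show jacobiPoly α β n
      = C (jc α β n) * ∑ m ∈ Finset.range (n+1), C (ja α β n m) * X^m from rfl,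
    Finset.mul_sum]
  exact Finset.sum_congr rfl (fun m _ => by rw [← mul_assoc, ← C_mul])

noncomputable def Lop (α β : ℝ) : Module.End ℝ (Polynomial ℝ) :=
  D1op * D1op + (α+β+1) • D1op - D2op β

lemma Lop_CX (α β a : ℝ) (m : ℕ) :
    Lop α β (C a * X^m)
      = C ((m:ℝ)*((m:ℝ)+α+β+1) * a) * X^m - C ((m:ℝ)*((m:ℝ)+β) * a) * X^(m-1) := by
  simp only [Lop, LinearMap.sub_apply, LinearMap.add_apply, Module.End.mul_apply,
    LinearMap.smul_apply, D1_CX, D2_CX]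
  rw [Polynomial.smul_eq_C_mul]
  simp only [C_mul, C_add, C_1]
  ring

lemma side (α β : ℝ) (N : ℕ) (t : ℝ) :
    D1op (jacobiPoly α β N) + t • jacobiPoly α β N
      = ∑ m ∈ Finset.range (N+1), C (jc α β N * (((m:ℝ)+t)) * ja α β N m) * X^m := by
  rw [jacobi_sum, map_sum, Finset.smul_sum, ← Finset.sum_add_distrib]
  refine Finset.sum_congr rfl (fun m _ => ?_)
  rw [D1_CX, Polynomial.smul_eq_C_mul]
  simp only [C_mul, C_add, C_1]
  ring

lemma eigen (α β : ℝ) (hβ : ∀ j : ℕ, β + 1 + (j : ℝ) ≠ 0) (n : ℕ) :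
    Lop α β (jacobiPoly α β n) = ((n:ℝ)*((n:ℝ)+α+β+1)) • jacobiPoly α β n := by
  rw [jacobi_sum, map_sum, Finset.smul_sum]
  simp_rw [Lop_CX, Polynomial.smul_eq_C_mul, ← mul_assoc, ← C_mul]
  rw [Finset.sum_sub_distrib]
  have key : ∑ m ∈ Finset.range (n+1), C ((m:ℝ)*((m:ℝ)+β) * jc α β n * ja α β n m) * X^(m-1)
      = ∑ m ∈ Finset.range (n+1), C ((m:ℝ)*((m:ℝ)+α+β+1) * jc α β n * ja α β n m) * X^m
        - ∑ m ∈ Finset.range (n+1), C ((n:ℝ)*((n:ℝ)+α+β+1) * (jc α β n * ja α β n m)) * X^m := by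
    rw [← Finset.sum_sub_distrib]
    rw [Finset.sum_range_succ'
      (fun m => C ((m:ℝ)*((m:ℝ)+β) * jc α β n * ja α β n m) * X^(m-1))]
    rw [Finset.sum_range_succ
      (fun m => C ((m:ℝ)*((m:ℝ)+α+β+1) * jc α β n * ja α β n m) * X^m
        - C ((n:ℝ)*((n:ℝ)+α+β+1) * (jc α β n * ja α β n m)) * X^m)]
    simp only [Nat.cast_zero, zero_mul, map_zero, add_zero]
    rw [show C ((n:ℝ)*((n:ℝ)+α+β+1) * jc α β n * ja α β n n) * X^n
        - C ((n:ℝ)*((n:ℝ)+α+β+1) * (jc α β n * ja α β n n)) * X^n = 0 from by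
          rw [← sub_mul, ← C_sub,
            show (n:ℝ)*((n:ℝ)+α+β+1) * jc α β n * ja α β n n
              - (n:ℝ)*((n:ℝ)+α+β+1) * (jc α β n * ja α β n n) = 0 from by ring, C_0, zero_mul],
      add_zero]
    refine Finset.sum_congr rfl (fun m _ => ?_)
    rw [Nat.add_sub_cancel, ← sub_mul, ← C_sub]
    refine congrArg (· * X^m) (congrArg C ?_)
    have hc := coeff_rec α β hβ n m
    push_cast
    linear_combination (jc α β n) * hc
  rw [key, sub_sub_cancel]

lemma lower (α β : ℝ) (hβ : ∀ j : ℕ, β + 1 + (j : ℝ) ≠ 0) (n : ℕ) :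
    D1op (jacobiPoly α β (n+1)) + (-((n:ℝ)+1)) • jacobiPoly α β (n+1)
      = D1op (jacobiPoly α β n) + ((n:ℝ)+α+β+1) • jacobiPoly α β n := by
  rw [side, side, Finset.sum_range_succ]
  rw [show C (jc α β (n+1) * (((n+1:ℕ):ℝ) + -((n:ℝ)+1)) * ja α β (n+1) (n+1)) * X^(n+1) = 0 from by
    rw [show jc α β (n+1) * (((n+1:ℕ):ℝ) + -((n:ℝ)+1)) * ja α β (n+1) (n+1) = 0 from by
      push_cast; ring, C_0, zero_mul], add_zero]
  refine Finset.sum_congr rfl (fun m _ => ?_)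
  refine congrArg (· * X^m) (congrArg C ?_)
  have h := lower_rec α β hβ n m
  linear_combination h

lemma jacobi_zero (α β : ℝ) : jacobiPoly α β 0 = 1 := by
  simp [jacobiPoly, poch]

lemma D1op_one : D1op (1 : Polynomial ℝ) = 0 := by
  simp [D1op]

lemma pZ_neg (α β : ℝ) {n : ℤ} (h : n < 0) : jacobiPolyZ α β n = 0 := if_pos h

lemma pZ_coe (α β : ℝ) (k : ℕ) : jacobiPolyZ α β (k:ℤ) = jacobiPoly α β k := by
  rw [jacobiPolyZ, if_neg (by omega), Int.toNat_natCast]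

lemma LopZ (α β : ℝ) (hβ : ∀ j : ℕ, β + 1 + (j : ℝ) ≠ 0) (n : ℤ) :
    Lop α β (jacobiPolyZ α β n) = (((n:ℤ):ℝ) * (((n:ℤ):ℝ)+α+β+1)) • jacobiPolyZ α β n := by
  rcases lt_or_ge n 0 with h | h
  · rw [pZ_neg α β h]; simp
  · obtain ⟨k, rfl⟩ := Int.eq_ofNat_of_zero_le h
    rw [pZ_coe]
    have := eigen α β hβ k
    push_cast
    exact this

lemma lowerZ (α β : ℝ) (hβ : ∀ j : ℕ, β + 1 + (j : ℝ) ≠ 0) (s : ℤ) (hs : 0 ≤ s) :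
    D1op (jacobiPolyZ α β s) + (-((s:ℤ):ℝ)) • jacobiPolyZ α β s
      = D1op (jacobiPolyZ α β (s-1)) + ((((s:ℤ):ℝ)-1)+α+β+1) • jacobiPolyZ α β (s-1) := by
  obtain ⟨k, rfl⟩ := Int.eq_ofNat_of_zero_le hs
  cases k with
  | zero =>
    rw [show ((0:ℕ):ℤ) - 1 = (-1 : ℤ) by norm_num, pZ_neg α β (by norm_num : (-1:ℤ) < 0),
      show ((0:ℕ):ℤ) = (0:ℤ) from rfl,
      show jacobiPolyZ α β (0:ℤ) = jacobiPoly α β 0 from by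
        rw [jacobiPolyZ, if_neg (by norm_num)]; rfl,
      jacobi_zero, D1op_one]
    simp
  | succ j =>
    rw [pZ_coe, show ((j+1:ℕ):ℤ) - 1 = (j:ℤ) by push_cast; ring, pZ_coe]
    rw [show ((((j+1:ℕ):ℤ)):ℝ) = (j:ℝ)+1 by push_cast; ring]
    rw [show ((j:ℝ)+1-1)+α+β+1 = (j:ℝ)+α+β+1 by ring]
    exact lower α β hβ j

noncomputable def nuP (α β : ℝ) : Polynomial ℝ := X * (X + C (α+β+1))

def GoodR (α β : ℝ) (r : Polynomial ℝ) : Prop :=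
  ∃ B ∈ Algebra.adjoin ℝ {D1op, D2op β},
    ∀ n : ℤ, -1 ≤ n →
      ∑ s ∈ Finset.Icc (0:ℤ) n,
          (Polynomial.eval (s:ℝ) r • jacobiPolyZ α β s
            - Polynomial.eval (-(s:ℝ)-α-β) r • jacobiPolyZ α β (s-1))
        = B (jacobiPolyZ α β n)

lemma sum_top {M : Type*} [AddCommMonoid M] (n : ℤ) (h : (-1:ℤ) ≤ n) (f : ℤ → M) :
    ∑ s ∈ Icc (0:ℤ) (n+1), f s = (∑ s ∈ Icc (0:ℤ) n, f s) + f (n+1) := by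
  rw [show Icc (0:ℤ) (n+1) = insert (n+1) (Icc 0 n) from by
    ext x; simp only [Finset.mem_Icc, Finset.mem_insert]; omega]
  rw [Finset.sum_insert (by simp only [Finset.mem_Icc]; omega), add_comm]

lemma good_zero (α β : ℝ) : GoodR α β 0 := by
  refine ⟨0, zero_mem _, fun n hn => ?_⟩
  simp

lemma good_add (α β : ℝ) {r r' : Polynomial ℝ} (h : GoodR α β r) (h' : GoodR α β r') :
    GoodR α β (r + r') := by
  obtain ⟨B, hB, hS⟩ := h
  obtain ⟨B', hB', hS'⟩ := h'
  refine ⟨B + B', add_mem hB hB', fun n hn => ?_⟩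
  rw [LinearMap.add_apply, ← hS n hn, ← hS' n hn, ← Finset.sum_add_distrib]
  refine Finset.sum_congr rfl fun s _ => ?_
  simp only [eval_add, add_smul]
  abel

lemma good_smul (α β : ℝ) (a : ℝ) {r : Polynomial ℝ} (h : GoodR α β r) :
    GoodR α β (a • r) := by
  obtain ⟨B, hB, hS⟩ := h
  refine ⟨a • B, Subalgebra.smul_mem _ hB a, fun n hn => ?_⟩
  rw [LinearMap.smul_apply, ← hS n hn, Finset.smul_sum]
  refine Finset.sum_congr rfl fun s _ => ?_
  simp only [eval_smul, smul_sub, smul_smul, smul_eq_mul]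

lemma int_ind (P : ℤ → Prop) (h0 : P (-1)) (h1 : ∀ n : ℤ, -1 ≤ n → P n → P (n+1)) :
    ∀ n : ℤ, -1 ≤ n → P n := fun n hn => Int.le_induction h0 h1 n hn

lemma good_one (α β : ℝ) : GoodR α β 1 := by
  refine ⟨1, one_mem _, int_ind _ ?_ ?_⟩
  · rw [Finset.Icc_eq_empty (by omega), Finset.sum_empty,
      pZ_neg α β (by omega : (-1:ℤ) < 0)]
    simp
  · intro n hn ih
    rw [sum_top n hn, ih, Module.End.one_apply, Module.End.one_apply]
    simp only [eval_one, one_smul, add_sub_cancel_right]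
    abel
lemma mem_D1 (β : ℝ) : D1op ∈ Algebra.adjoin ℝ {D1op, D2op β} :=
  Algebra.subset_adjoin (Set.mem_insert _ _)

lemma mem_D2 (β : ℝ) : D2op β ∈ Algebra.adjoin ℝ {D1op, D2op β} :=
  Algebra.subset_adjoin (Set.mem_insert_of_mem _ rfl)

lemma mem_Lop (α β : ℝ) : Lop α β ∈ Algebra.adjoin ℝ {D1op, D2op β} :=
  sub_mem (add_mem (mul_mem (mem_D1 β) (mem_D1 β))
    (Subalgebra.smul_mem _ (mem_D1 β) _)) (mem_D2 β)

lemma good_lin (α β : ℝ) (hβ : ∀ j : ℕ, β + 1 + (j : ℝ) ≠ 0) :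
    GoodR α β (X + C ((α+β+1)/2)) := by
  refine ⟨D1op + ((α+β+1)/2) • (1 : Module.End ℝ (Polynomial ℝ)),
    add_mem (mem_D1 β) (Subalgebra.smul_mem _ (one_mem _) _), int_ind _ ?_ ?_⟩
  · rw [Finset.Icc_eq_empty (by omega), Finset.sum_empty,
      pZ_neg α β (by omega : (-1:ℤ) < 0)]
    simp
  · intro n hn ih
    rw [sum_top n hn, ih]
    have h := lowerZ α β hβ (n+1) (by omega)
    rw [show (n:ℤ)+1-1 = n from by ring] at h
    simp only [LinearMap.add_apply, LinearMap.smul_apply, Module.End.one_apply,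
      eval_add, eval_X, eval_C, add_sub_cancel_right] at *
    push_cast at h ⊢
    linear_combination (norm := module) -h

lemma good_mul_nu (α β : ℝ) (hβ : ∀ j : ℕ, β + 1 + (j : ℝ) ≠ 0) {r : Polynomial ℝ}
    (h : GoodR α β r) : GoodR α β (nuP α β * r) := by
  obtain ⟨B, hB, hS⟩ := h
  refine ⟨Lop α β * B, mul_mem (mem_Lop α β) hB, fun n hn => ?_⟩
  rw [Module.End.mul_apply, ← hS n hn, map_sum]
  refine Finset.sum_congr rfl fun s _ => ?_
  rw [map_sub, map_smul, map_smul, LopZ α β hβ s, LopZ α β hβ (s-1), smul_smul, smul_smul]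
  congr 1
  · congr 1
    simp only [nuP, eval_mul, eval_add, eval_X, eval_C]
    ring
  · congr 1
    simp only [nuP, eval_mul, eval_add, eval_X, eval_C]
    push_cast
    ring

noncomputable def genQ (α β : ℝ) : ℕ → Polynomial ℝ
  | 0 => 1
  | 1 => X + C ((α+β+1)/2)
  | (d+2) => nuP α β * genQ α β d

lemma nuP_monic (α β : ℝ) : (nuP α β).Monic := monic_X.mul (monic_X_add_C _)

lemma genQ_spec (α β : ℝ) : ∀ d : ℕ, (genQ α β d).Monic ∧ (genQ α β d).natDegree = d := by
  intro d
  induction d using Nat.strong_induction_on with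
  | _ d ih =>
    match d with
    | 0 => exact ⟨monic_one, natDegree_one⟩
    | 1 => exact ⟨monic_X_add_C _, natDegree_X_add_C _⟩
    | (k+2) =>
      obtain ⟨hm, hd⟩ := ih k (by omega)
      refine ⟨(nuP_monic α β).mul hm, ?_⟩
      rw [show genQ α β (k+2) = nuP α β * genQ α β k from rfl,
        (nuP_monic α β).natDegree_mul hm, hd, nuP,
        monic_X.natDegree_mul (monic_X_add_C _), natDegree_X, natDegree_X_add_C]
      omega

lemma good_genQ (α β : ℝ) (hβ : ∀ j : ℕ, β + 1 + (j : ℝ) ≠ 0) :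
    ∀ d : ℕ, GoodR α β (genQ α β d) := by
  intro d
  induction d using Nat.strong_induction_on with
  | _ d ih =>
    match d with
    | 0 => exact good_one α β
    | 1 => exact good_lin α β hβ
    | (k+2) => exact good_mul_nu α β hβ (ih k (by omega))

lemma good_all (α β : ℝ) (hβ : ∀ j : ℕ, β + 1 + (j : ℝ) ≠ 0) (r : Polynomial ℝ) :
    GoodR α β r := by
  have H : ∀ d : ℕ, ∀ r : Polynomial ℝ, r.natDegree < d → GoodR α β r := by
    intro d
    induction d using Nat.strong_induction_on with
    | _ d ih =>
      intro r hr
      by_cases h0 : r = 0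
      · exact h0 ▸ good_zero α β
      set e := r.natDegree with he
      set r' := r - r.leadingCoeff • genQ α β e with hr'
      have hmono := (genQ_spec α β e).1
      have hdeg := (genQ_spec α β e).2
      have hrr : r = r' + r.leadingCoeff • genQ α β e := by rw [hr']; ring
      have hgood_q : GoodR α β (r.leadingCoeff • genQ α β e) :=
        good_smul α β _ (good_genQ α β hβ e)
      by_cases h1 : r' = 0
      · rw [hrr, h1, zero_add]; exact hgood_q
      have hq0 : genQ α β e ≠ 0 := hmono.ne_zero
      have hC : r.leadingCoeff ≠ 0 := leadingCoeff_ne_zero.mpr h0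
      have hdd : (r.leadingCoeff • genQ α β e).degree = r.degree := by
        rw [smul_eq_C_mul, degree_C_mul hC, degree_eq_natDegree hq0,
          degree_eq_natDegree h0, hdeg, he]
      have hlc : r.leadingCoeff = (r.leadingCoeff • genQ α β e).leadingCoeff := by
        rw [smul_eq_C_mul, leadingCoeff_mul, leadingCoeff_C, hmono.leadingCoeff, mul_one]
      have hlt : r'.natDegree < e := by
        have hd2 : r'.degree < r.degree := degree_sub_lt hdd.symm h0 hlc
        rw [he]
        exact natDegree_lt_natDegree h1 hd2
      have hgood_r' : GoodR α β r' := ih e hr r' hlt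
      rw [hrr]
      exact good_add α β hgood_r' hgood_q
  exact H (r.natDegree + 1) r (by omega)

theorem discrete_integral_as_operator (α β : ℝ)
    (hβ : ∀ j : ℕ, β + 1 + (j : ℝ) ≠ 0) (r : Polynomial ℝ) :
    ∃ B ∈ Algebra.adjoin ℝ {D1op, D2op β},
      ∀ n : ℤ, -1 ≤ n →
        ∑ s ∈ Finset.Icc (0 : ℤ) n,
            (Polynomial.eval (s : ℝ) r • jacobiPolyZ α β s
              - Polynomial.eval (-(s : ℝ) - α - β) r • jacobiPolyZ α β (s - 1))
          = B (jacobiPolyZ α β n) :=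
  good_all α β hβ r
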